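/- arXiv:2509.20331 — 3 statements merged into one kernel-verified Lean document; each statement's English description precedes it below -/
import Mathlib

section
/- The monoid QM with presentation ⟨x, y, q | xq = qx, yq = qy, yx = xyq⟩ has the property that every element can be written uniquely in the normal form x^k y^l q^m with k, l, m ≥ 0. -/
/-! Moving each generator leftwards past a normal form with the relations `y x^k = x^k y q^k`
and `q` central shows that every element has a normal form. Uniqueness comes from the
representation of `QM` by unitriangular matrices over `ℕ` sending `x`, `y`, `q` to `1 + E₁₂`,
`1 + E₀₁`, `1 + E₀₂`: it maps `x^k y^l q^m` to `!![1, l, m; 0, 1, k; 0, 0, 1]`, from which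
`(k, l, m)` can be read off. -/

namespace Stmt0

/-- Generators: `0 ↦ x`, `1 ↦ y`, `2 ↦ q`. -/
inductive QMrel : FreeMonoid (Fin 3) → FreeMonoid (Fin 3) → Prop
  | xq : QMrel (FreeMonoid.of 0 * FreeMonoid.of 2) (FreeMonoid.of 2 * FreeMonoid.of 0)
  | yq : QMrel (FreeMonoid.of 1 * FreeMonoid.of 2) (FreeMonoid.of 2 * FreeMonoid.of 1)
  | yx : QMrel (FreeMonoid.of 1 * FreeMonoid.of 0)
      (FreeMonoid.of 0 * FreeMonoid.of 1 * FreeMonoid.of 2)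

def QM := (conGen QMrel).Quotient

noncomputable instance : Monoid QM := Con.monoid _

noncomputable def x : QM := (conGen QMrel).mk' (FreeMonoid.of 0)
noncomputable def y : QM := (conGen QMrel).mk' (FreeMonoid.of 1)
noncomputable def q : QM := (conGen QMrel).mk' (FreeMonoid.of 2)

def heisenberg (k l m : ℕ) : Matrix (Fin 3) (Fin 3) ℕ := !![1, l, m; 0, 1, k; 0, 0, 1]

theorem heisenberg_mul (k l m k' l' m' : ℕ) :
    heisenberg k l m * heisenberg k' l' m' = heisenberg (k + k') (l + l') (m + m' + l * k') := by
  ext i j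
  fin_cases i <;> fin_cases j <;> simp [heisenberg, Matrix.mul_apply, Fin.sum_univ_three] <;> ring

theorem heisenberg_injective :
    Function.Injective fun t : ℕ × ℕ × ℕ => heisenberg t.1 t.2.1 t.2.2 := by
  rintro ⟨k, l, m⟩ ⟨k', l', m'⟩ h
  have hk := congrFun (congrFun h 1) 2
  have hl := congrFun (congrFun h 0) 1
  have hm := congrFun (congrFun h 0) 2
  simp_all [heisenberg]

theorem heisenberg_zero : heisenberg 0 0 0 = 1 := by
  ext i j
  fin_cases i <;> fin_cases j <;> rfl

theorem heisenberg_pow_of_snd_eq_zero (k m n : ℕ) :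
    heisenberg k 0 m ^ n = heisenberg (n * k) 0 (n * m) := by
  induction n with
  | zero => simp [heisenberg_zero]
  | succ n ih => rw [pow_succ, ih, heisenberg_mul]; simp [add_mul]

theorem heisenberg_pow_of_fst_eq_zero (l m n : ℕ) :
    heisenberg 0 l m ^ n = heisenberg 0 (n * l) (n * m) := by
  induction n with
  | zero => simp [heisenberg_zero]
  | succ n ih => rw [pow_succ, ih, heisenberg_mul]; simp [add_mul]

theorem commute_x_q : Commute x q := Quotient.sound (ConGen.Rel.of _ _ QMrel.xq)

theorem commute_y_q : Commute y q := Quotient.sound (ConGen.Rel.of _ _ QMrel.yq)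

theorem y_mul_x : y * x = x * y * q := Quotient.sound (ConGen.Rel.of _ _ QMrel.yx)

theorem y_mul_x_pow (k : ℕ) : y * x ^ k = x ^ k * y * q ^ k := by
  induction k with
  | zero => simp
  | succ k ih =>
    calc y * x ^ (k + 1) = y * x ^ k * x := by rw [pow_succ, mul_assoc]
      _ = x ^ k * y * (q ^ k * x) := by rw [ih, mul_assoc]
      _ = x ^ k * (y * x) * q ^ k := by
        rw [← (commute_x_q.pow_right k).eq]; simp only [mul_assoc]
      _ = x ^ (k + 1) * y * q ^ (k + 1) := by
        rw [y_mul_x, pow_succ, pow_succ']; simp only [mul_assoc]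

noncomputable def nf (t : ℕ × ℕ × ℕ) : QM := x ^ t.1 * y ^ t.2.1 * q ^ t.2.2

theorem x_mul_nf (k l m : ℕ) : x * nf (k, l, m) = nf (k + 1, l, m) := by
  simp only [nf, pow_succ', mul_assoc]

theorem y_mul_nf (k l m : ℕ) : y * nf (k, l, m) = nf (k, l + 1, k + m) := by
  calc y * nf (k, l, m) = (y * x ^ k) * y ^ l * q ^ m := by simp only [nf, mul_assoc]
    _ = x ^ k * y * (q ^ k * y ^ l) * q ^ m := by rw [y_mul_x_pow]; simp only [mul_assoc]
    _ = nf (k, l + 1, k + m) := by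
      rw [← ((commute_y_q.pow_right k).pow_left l).eq, nf, pow_succ', pow_add]
      simp only [mul_assoc]

theorem q_mul_nf (k l m : ℕ) : q * nf (k, l, m) = nf (k, l, m + 1) := by
  have hq : Commute q (nf (k, l, m)) :=
    ((commute_x_q.symm.pow_right k).mul_right (commute_y_q.symm.pow_right l)).mul_right
      (Commute.pow_right rfl m)
  rw [hq.eq, nf, nf, pow_succ, mul_assoc]

theorem nf_surjective : Function.Surjective nf := by
  intro a
  induction a using Con.induction_on with | H w => ?_
  induction w using FreeMonoid.inductionOn' with
  | one => exact ⟨(0, 0, 0), by simp only [nf, pow_zero, mul_one]; rfl⟩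
  | of_mul g w ih =>
    obtain ⟨⟨k, l, m⟩, h⟩ := ih
    rw [Con.coe_mul, ← h]
    fin_cases g
    exacts [⟨_, (x_mul_nf k l m).symm⟩, ⟨_, (y_mul_nf k l m).symm⟩, ⟨_, (q_mul_nf k l m).symm⟩]

noncomputable def toMatrix : QM →* Matrix (Fin 3) (Fin 3) ℕ :=
  (conGen QMrel).lift (FreeMonoid.lift ![heisenberg 1 0 0, heisenberg 0 1 0, heisenberg 0 0 1])
    (Con.conGen_le.mpr fun _ _ h => by cases h <;> simp [heisenberg_mul])

theorem toMatrix_nf (t : ℕ × ℕ × ℕ) : toMatrix (nf t) = heisenberg t.1 t.2.1 t.2.2 := by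
  have hx : toMatrix x = heisenberg 1 0 0 := rfl
  have hy : toMatrix y = heisenberg 0 1 0 := rfl
  have hq : toMatrix q = heisenberg 0 0 1 := rfl
  simp [nf, hx, hy, hq, heisenberg_pow_of_snd_eq_zero, heisenberg_pow_of_fst_eq_zero, heisenberg_mul]

theorem nf_injective : Function.Injective nf := fun s t h =>
  heisenberg_injective <| by simpa only [toMatrix_nf] using congrArg toMatrix h

theorem stmt0 :
    ∀ a : QM, ∃! t : ℕ × ℕ × ℕ, a = x ^ t.1 * y ^ t.2.1 * q ^ t.2.2 := by
  intro a
  obtain ⟨t, rfl⟩ := nf_surjective a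
  exact ⟨t, rfl, fun s hs => nf_injective hs.symm⟩

end Stmt0
end

section
/- Fix d ≥ 1. The associative unital k-algebra à with generators c_1, …, c_d and relations c_i c_j = c_{i+j} for i + j ≤ d, and c_i c_j = c_k c_l whenever d + 1 ≤ i + j = k + l ≤ 2d, is isomorphic to the polynomial algebra k[t] via the map sending c_k to t^k. -/
/- Fix d ≥ 1. The associative unital k-algebra à with generators c_1, …, c_d and
relations c_i c_j = c_{i+j} for i + j ≤ d, and c_i c_j = c_k c_l whenever
d + 1 ≤ i + j = k + l ≤ 2d, is isomorphic to the polynomial algebra k[t] via the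
map sending c_k to t^k. -/

namespace Stmt2

/-- The generator `c_i` (for `1 ≤ i ≤ d`) in the free associative algebra;
junk value `0` outside that range. -/
noncomputable def gen (k : Type) [Field k] (d : ℕ) (i : ℕ) : FreeAlgebra k (Fin d) :=
  if h : 1 ≤ i ∧ i ≤ d then FreeAlgebra.ι k (⟨i - 1, by omega⟩ : Fin d) else 0

/-- The defining relations of the algebra Ã. -/
inductive Rel (k : Type) [Field k] (d : ℕ) :
    FreeAlgebra k (Fin d) → FreeAlgebra k (Fin d) → Prop
  | low (i j : ℕ) (hi : 1 ≤ i) (hj : 1 ≤ j) (hij : i + j ≤ d) :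
      Rel k d (gen k d i * gen k d j) (gen k d (i + j))
  | high (i j p l : ℕ) (hi : 1 ≤ i) (hi' : i ≤ d) (hj : 1 ≤ j) (hj' : j ≤ d)
      (hp : 1 ≤ p) (hp' : p ≤ d) (hl : 1 ≤ l) (hl' : l ≤ d)
      (hlow : d + 1 ≤ i + j) (heq : i + j = p + l) (hhigh : i + j ≤ 2 * d) :
      Rel k d (gen k d i * gen k d j) (gen k d p * gen k d l)

open Polynomial

/-- The map to `k[X]` sending `c_i` to `X^i`. -/
noncomputable def f (k : Type) [Field k] (d : ℕ) : FreeAlgebra k (Fin d) →ₐ[k] Polynomial k :=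
  FreeAlgebra.lift k (fun i => X ^ ((i : ℕ) + 1))

lemma f_gen (k : Type) [Field k] (d i : ℕ) (h1 : 1 ≤ i) (h2 : i ≤ d) :
    f k d (gen k d i) = X ^ i := by
  rw [gen, dif_pos ⟨h1, h2⟩, f, FreeAlgebra.lift_ι_apply]
  congr 1
  simp
  omega

lemma f_rel (k : Type) [Field k] (d : ℕ) ⦃x y : FreeAlgebra k (Fin d)⦄
    (h : Rel k d x y) : f k d x = f k d y := by
  cases h with
  | low i j hi hj hij =>
      rw [map_mul, f_gen k d i hi (by omega), f_gen k d j hj (by omega),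
        f_gen k d (i + j) (by omega) hij, pow_add]
  | high i j p l hi hi' hj hj' hp hp' hl hl' hlow heq hhigh =>
      rw [map_mul, map_mul, f_gen k d i hi hi', f_gen k d j hj hj',
        f_gen k d p hp hp', f_gen k d l hl hl', ← pow_add, ← pow_add, heq]

lemma pow_gen (k : Type) [Field k] (d : ℕ) (m : ℕ) (h1 : 1 ≤ m) (h2 : m ≤ d) :
    (RingQuot.mkAlgHom k (Rel k d) (gen k d 1)) ^ m
      = RingQuot.mkAlgHom k (Rel k d) (gen k d m) := by
  induction m with
  | zero => omega
  | succ n ih =>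
      rcases Nat.eq_or_lt_of_le h1 with h | h
      · simp [← h]
      · have hn1 : 1 ≤ n := by omega
        rw [pow_succ, ih hn1 (by omega), ← map_mul,
          RingQuot.mkAlgHom_rel k (Rel.low n 1 hn1 le_rfl h2)]

theorem stmt2 (k : Type) [Field k] [CharZero k] (d : ℕ) (hd : 1 ≤ d) :
    ∃ e : RingQuot (Rel k d) ≃ₐ[k] Polynomial k,
      ∀ i : ℕ, 1 ≤ i → i ≤ d →
        e (RingQuot.mkAlgHom k (Rel k d) (gen k d i)) = Polynomial.X ^ i := by
  set c := RingQuot.mkAlgHom k (Rel k d) (gen k d 1) with hc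
  let φ : RingQuot (Rel k d) →ₐ[k] Polynomial k :=
    RingQuot.liftAlgHom k ⟨f k d, f_rel k d⟩
  let ψ : Polynomial k →ₐ[k] RingQuot (Rel k d) := Polynomial.aeval c
  have hφ : ∀ x, φ (RingQuot.mkAlgHom k (Rel k d) x) = f k d x := fun x =>
    RingQuot.liftAlgHom_mkAlgHom_apply k _ _ _
  have h1 : φ.comp ψ = AlgHom.id k (Polynomial k) := by
    apply Polynomial.algHom_ext
    simp only [AlgHom.coe_comp, Function.comp_apply, AlgHom.coe_id, id_eq, ψ, aeval_X]
    rw [hc, hφ, f_gen k d 1 le_rfl hd, pow_one]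
  have h2 : ψ.comp φ = AlgHom.id k (RingQuot (Rel k d)) := by
    apply RingQuot.ringQuot_ext'
    apply FreeAlgebra.hom_ext
    funext m
    have hg : gen k d ((m : ℕ) + 1) = FreeAlgebra.ι k m := by
      rw [gen, dif_pos ⟨by omega, by omega⟩]
      congr 1
    simp only [Function.comp_apply, AlgHom.coe_comp, AlgHom.comp_id]
    rw [hφ, ← hg, f_gen k d (m + 1) (by omega) (by omega)]
    simp only [map_pow, aeval_X, ψ]
    rw [pow_gen k d (m + 1) (by omega) (by omega), hg]
    rfl
  refine ⟨AlgEquiv.ofAlgHom φ ψ h1 h2, fun i hi hi' => ?_⟩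
  show φ (RingQuot.mkAlgHom k (Rel k d) (gen k d i)) = X ^ i
  rw [hφ, f_gen k d i hi hi']

end Stmt2
end

section
/- Let Γ be a simplicial complex on vertex set V and let DJ(Γ) ⊆ ∏_{v∈V} CP^∞ be the union over faces σ ∈ Γ of the subproducts ∏_{v∈σ} CP^∞ × ∏_{v∉σ} {pt}. If G ∈ V is a vertex such that Γ' = Γ restricted to V∖{G} and Link_Γ(G) are simplicial complexes, then DJ(Γ) is the pushout of DJ(Link_Γ(G)) × CP^∞ ← DJ(Link_Γ(G)) → DJ(Γ'), where the left map uses the basepoint in the CP^∞ factor and the right map is the inclusion. -/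
namespace Stmt19

variable {V C : Type} [Fintype V] [DecidableEq V] [TopologicalSpace C]

/-- Davis–Januszkiewicz space of a collection of finite subsets of `V`,
inside the product `V → C` with basepoint `pt`. -/
def DJ (pt : C) (Δ : Set (Finset V)) : Set (V → C) :=
  {f | ∃ σ ∈ Δ, ∀ v, v ∉ σ → f v = pt}

/-- The link of a vertex. -/
def Link (G : V) (Γ : Set (Finset V)) : Set (Finset V) :=
  {σ | G ∉ σ ∧ insert G σ ∈ Γ}

/-- The deletion of a vertex. -/
def Del (G : V) (Γ : Set (Finset V)) : Set (Finset V) :=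
  {σ | σ ∈ Γ ∧ G ∉ σ}

theorem stmt19 (pt : C) (Γ : Set (Finset V))
    (hΓ : ∀ s t : Finset V, s ⊆ t → t ∈ Γ → s ∈ Γ) (G : V) :
    DJ pt Γ =
      {f | Function.update f G pt ∈ DJ pt (Link G Γ)} ∪ DJ pt (Del G Γ) ∧
    {f | Function.update f G pt ∈ DJ pt (Link G Γ)} ∩ DJ pt (Del G Γ) =
      DJ pt (Link G Γ) := by
  constructor
  · ext f
    constructor
    · rintro ⟨σ, hσ, hf⟩
      by_cases hG : G ∈ σ
      · left
        refine ⟨σ.erase G, ⟨Finset.notMem_erase _ _, ?_⟩, ?_⟩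
        · rwa [Finset.insert_erase hG]
        · intro v hv
          by_cases hvG : v = G
          · subst hvG; simp [Function.update]
          · rw [Function.update_of_ne hvG]
            exact hf v (fun h => hv (Finset.mem_erase.mpr ⟨hvG, h⟩))
      · right
        exact ⟨σ, ⟨hσ, hG⟩, hf⟩
    · rintro (⟨τ, ⟨hGτ, hτ⟩, hf⟩ | ⟨σ, ⟨hσ, _⟩, hf⟩)
      · refine ⟨insert G τ, hτ, fun v hv => ?_⟩
        have hvG : v ≠ G := fun h => hv (h ▸ Finset.mem_insert_self G τ)
        have := hf v (fun h => hv (Finset.mem_insert_of_mem h))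
        rwa [Function.update_of_ne hvG] at this
      · exact ⟨σ, hσ, hf⟩
  · ext f
    constructor
    · rintro ⟨⟨τ, ⟨hGτ, hτ⟩, hf⟩, ⟨σ, ⟨hσ, hGσ⟩, hg⟩⟩
      have hfG : f G = pt := hg G hGσ
      refine ⟨τ, ⟨hGτ, hτ⟩, fun v hv => ?_⟩
      by_cases hvG : v = G
      · subst hvG; exact hfG
      · have := hf v hv
        rwa [Function.update_of_ne hvG] at this
    · rintro ⟨τ, ⟨hGτ, hτ⟩, hf⟩
      have hfG : f G = pt := hf G hGτ
      constructor
      · refine ⟨τ, ⟨hGτ, hτ⟩, fun v hv => ?_⟩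
        by_cases hvG : v = G
        · subst hvG; simp [Function.update]
        · rw [Function.update_of_ne hvG]; exact hf v hv
      · exact ⟨τ, ⟨hΓ τ (insert G τ) (Finset.subset_insert _ _) hτ, hGτ⟩, hf⟩

end Stmt19
end
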